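/- Let A ∈ ℂ^{n×n} be of the form A = Q diag(J_1,…,J_p) Q^{-1} where each J_i is an m_i × m_i Jordan block (∑ m_i = n), and let Ã = A + E. Let Λ = diag(λ_1 I_{m_1}, …, λ_p I_{m_p}) be the diagonal of eigenvalues, and T = diag(T_1,…,T_p) with T_i = diag(1, ε, …, ε^{m_i−1}) for some 0 < ε ≤ 1. Then ‖T^{-1}Q^{-1}ÃQT − Λ‖_F² ≤ ε^{2(1−m)}δ(E_Q)² + 2ε²√(n−p)·δ(E_Q) + (n−p)ε² + (1/n)|tr(E)|², where m = max_i m_i, E_Q = Q^{-1}EQ, and δ(M) := (‖M‖_F² − (1/n)|tr(M)|²)^{1/2}. -/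

import Mathlib

/-!
Conjugating by the scaling `T` turns the residual into `ε • N + T⁻¹ E_Q T`, where `N` is the
nilpotent part of the Jordan form. Its diagonal is that of `E_Q`, its entries at the ones of `N`
are `ε (1 + (E_Q)ₓᵧ)`, and every other entry is an entry of `E_Q` magnified by at most
`ε^(1-m)`. The `n - p` superdiagonal positions give `(n - p) ε²` plus a cross term, bounded by
Cauchy–Schwarz; and the off-diagonal mass of `E_Q` is at most `δ(E_Q)²`, because
`|tr E_Q|² / n ≤ ∑ |(E_Q)ₓₓ|²`, again by Cauchy–Schwarz.
-/

open Matrix BigOperators Polynomial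

/-- Squared Frobenius norm over an arbitrary finite index type. -/
noncomputable def frobSq {ι : Type*} [Fintype ι] (M : Matrix ι ι ℂ) : ℝ :=
  ∑ i, ∑ j, ‖M i j‖ ^ 2

/-- δ(M)² = ‖M‖_F² − (1/n)|tr M|². -/
noncomputable def deltaSq {ι : Type*} [Fintype ι] (M : Matrix ι ι ℂ) : ℝ :=
  frobSq M - (1 / (Fintype.card ι : ℝ)) * ‖M.trace‖ ^ 2

noncomputable def delta {ι : Type*} [Fintype ι] (M : Matrix ι ι ℂ) : ℝ :=
  Real.sqrt (deltaSq M)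

/-- The m×m Jordan block with eigenvalue lam. -/
def jordanBlock (m : ℕ) (lam : ℂ) : Matrix (Fin m) (Fin m) ℂ :=
  Matrix.of fun j k => if j = k then lam else if (j : ℕ) + 1 = (k : ℕ) then 1 else 0

open Finset

section FrobeniusBounds

variable {ι : Type*} [Fintype ι]

theorem one_div_card_mul_norm_trace_sq_le (M : Matrix ι ι ℂ) :
    1 / (Fintype.card ι : ℝ) * ‖M.trace‖ ^ 2 ≤ ∑ x, ‖M x x‖ ^ 2 := by
  rcases (Fintype.card ι).eq_zero_or_pos with h | h
  · simp [h, sum_nonneg]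
  rw [one_div_mul_eq_div, div_le_iff₀' (by exact_mod_cast h)]
  calc ‖M.trace‖ ^ 2 ≤ (∑ x, ‖M x x‖) ^ 2 := by gcongr; exact norm_sum_le _ _
    _ ≤ _ := by simpa using sq_sum_le_card_mul_sum_sq (s := univ) (f := fun x => ‖M x x‖)

variable [DecidableEq ι]

theorem frobSq_eq_sum_diag_add_sum_offDiag (M : Matrix ι ι ℂ) :
    frobSq M = ∑ x, ‖M x x‖ ^ 2 + ∑ z ∈ univ.offDiag, ‖M z.1 z.2‖ ^ 2 := by
  rw [frobSq, ← sum_product' univ univ (fun x y => ‖M x y‖ ^ 2), ← diag_union_offDiag,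
    sum_union (disjoint_diag_offDiag _), sum_diag]

theorem sum_offDiag_le_deltaSq (M : Matrix ι ι ℂ) :
    ∑ z ∈ univ.offDiag, ‖M z.1 z.2‖ ^ 2 ≤ deltaSq M := by
  rw [deltaSq, frobSq_eq_sum_diag_add_sum_offDiag]
  linarith [one_div_card_mul_norm_trace_sq_le M]

theorem sum_norm_le_sqrt_card_mul_delta {S : Finset (ι × ι)} (hS : S ⊆ univ.offDiag)
    (M : Matrix ι ι ℂ) :
    ∑ z ∈ S, ‖M z.1 z.2‖ ≤ Real.sqrt #S * delta M := by
  rw [delta, ← Real.sqrt_mul (Nat.cast_nonneg _)]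
  apply Real.le_sqrt_of_sq_le
  calc (∑ z ∈ S, ‖M z.1 z.2‖) ^ 2 ≤ #S * ∑ z ∈ S, ‖M z.1 z.2‖ ^ 2 :=
        sq_sum_le_card_mul_sum_sq
    _ ≤ #S * deltaSq M := by
        gcongr
        exact (sum_le_sum_of_subset_of_nonneg hS fun _ _ _ => by positivity).trans
          (sum_offDiag_le_deltaSq M)

theorem frobSq_le_of_entry_bounds {S : Finset (ι × ι)} (hS : S ⊆ univ.offDiag)
    {N M : Matrix ι ι ℂ} {ε K : ℝ} (hε0 : 0 ≤ ε) (hε1 : ε ≤ 1) (hK : 1 ≤ K)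
    (hdiag : ∀ x, N x x = M x x)
    (hS_entry : ∀ z ∈ S, ‖N z.1 z.2‖ ≤ ε * (1 + ‖M z.1 z.2‖))
    (hrest_entry : ∀ z ∈ univ.offDiag \ S, ‖N z.1 z.2‖ ≤ K * ‖M z.1 z.2‖) :
    frobSq N ≤ K ^ 2 * deltaSq M + 2 * ε ^ 2 * Real.sqrt #S * delta M + #S * ε ^ 2 +
      1 / (Fintype.card ι : ℝ) * ‖M.trace‖ ^ 2 := by
  have hN := frobSq_eq_sum_diag_add_sum_offDiag N
  have hδ : deltaSq M = frobSq M - 1 / (Fintype.card ι : ℝ) * ‖M.trace‖ ^ 2 := rfl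
  rw [frobSq_eq_sum_diag_add_sum_offDiag, ← sum_sdiff hS] at hδ
  rw [← sum_sdiff hS] at hN
  simp only [hdiag] at hN
  have hS_sum : ∑ z ∈ S, ‖N z.1 z.2‖ ^ 2 ≤
      ε ^ 2 * (#S + 2 * ∑ z ∈ S, ‖M z.1 z.2‖ + ∑ z ∈ S, ‖M z.1 z.2‖ ^ 2) := by
    calc ∑ z ∈ S, ‖N z.1 z.2‖ ^ 2 ≤ ∑ z ∈ S, (ε * (1 + ‖M z.1 z.2‖)) ^ 2 :=
          sum_le_sum fun z hz => by gcongr; exact hS_entry z hz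
      _ = _ := by simp only [mul_pow, ← mul_sum, add_sq, sum_add_distrib]; simp [mul_sum]
  have hrest_sum : ∑ z ∈ univ.offDiag \ S, ‖N z.1 z.2‖ ^ 2 ≤
      K ^ 2 * ∑ z ∈ univ.offDiag \ S, ‖M z.1 z.2‖ ^ 2 := by
    rw [mul_sum]
    exact sum_le_sum fun z hz => by rw [← mul_pow]; gcongr; exact hrest_entry z hz
  have hsqrt := sum_norm_le_sqrt_card_mul_delta hS M
  have htrace := one_div_card_mul_norm_trace_sq_le M
  have hS_nonneg : 0 ≤ ∑ z ∈ S, ‖M z.1 z.2‖ ^ 2 := sum_nonneg fun _ _ => by positivity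
  have hε2 : ε ^ 2 ≤ K ^ 2 := by nlinarith
  -- With `D` the diagonal mass of `M` and `P` its mass on `S`, what is left is
  -- `(K² - 1) (D - |tr M|² / card ι) + (K² - ε²) P ≥ 0`.
  nlinarith [mul_le_mul_of_nonneg_left hsqrt (by positivity : (0 : ℝ) ≤ 2 * ε ^ 2),
    mul_nonneg (by nlinarith : (0 : ℝ) ≤ K ^ 2 - 1) (sub_nonneg.2 htrace),
    mul_nonneg (sub_nonneg.2 hε2) hS_nonneg]

end FrobeniusBounds

section DiagonalConjugation

variable {n K : Type*} [Fintype n] [DecidableEq n] [Field K] {d : n → K}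

theorem inv_diagonal_mul_mul_diagonal_apply (hd : ∀ x, d x ≠ 0) (B : Matrix n n K) (x y : n) :
    ((diagonal d)⁻¹ * B * diagonal d) x y = (d x)⁻¹ * B x y * d y := by
  have hinv : (diagonal d)⁻¹ = diagonal fun x => (d x)⁻¹ :=
    inv_eq_left_inv (by simp [diagonal_mul_diagonal, hd])
  rw [hinv, mul_diagonal, diagonal_mul]

theorem inv_diagonal_mul_diagonal_mul_diagonal (hd : ∀ x, d x ≠ 0) (v : n → K) :
    (diagonal d)⁻¹ * diagonal v * diagonal d = diagonal v := by
  ext x y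
  rw [inv_diagonal_mul_mul_diagonal_apply hd, diagonal_apply]
  split_ifs with h
  · subst h; field_simp [hd x]
  · simp

end DiagonalConjugation

section JordanForm

variable {p : ℕ}

def jordanSuperdiag (m : Fin p → ℕ) : Finset ((Σ i, Fin (m i)) × (Σ i, Fin (m i))) :=
  univ.filter fun z => z.1.1 = z.2.1 ∧ (z.1.2 : ℕ) + 1 = z.2.2

theorem mem_jordanSuperdiag {m : Fin p → ℕ} {i i' : Fin p} {j : Fin (m i)} {k : Fin (m i')} :
    (⟨i, j⟩, ⟨i', k⟩) ∈ jordanSuperdiag m ↔ i = i' ∧ (j : ℕ) + 1 = k := by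
  simp [jordanSuperdiag]

theorem card_jordanSuperdiag (m : Fin p → ℕ) : #(jordanSuperdiag m) = ∑ i, (m i - 1) := by
  calc #(jordanSuperdiag m) = #(univ : Finset (Σ i, Fin (m i - 1))) := by
        refine card_bij' (fun z hz => ⟨z.1.1, ⟨z.1.2, ?_⟩⟩)
          (fun a _ => (⟨a.1, ⟨a.2, by omega⟩⟩, ⟨a.1, ⟨a.2 + 1, by omega⟩⟩)) ?_ ?_ ?_ ?_
        · obtain ⟨⟨i, j⟩, ⟨i', k⟩⟩ := z
          obtain ⟨rfl, h⟩ := mem_jordanSuperdiag.1 hz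
          have := k.2
          simp only
          omega
        · simp
        · simp [jordanSuperdiag]
        · rintro ⟨⟨i, j⟩, ⟨i', k⟩⟩ hz
          obtain ⟨rfl, h⟩ := mem_jordanSuperdiag.1 hz
          simp [h]
        · intro a _
          rfl
    _ = ∑ i, (m i - 1) := by simp

theorem card_jordanSuperdiag_add {m : Fin p → ℕ} (hm : ∀ i, 1 ≤ m i) :
    #(jordanSuperdiag m) + p = ∑ i, m i := by
  calc #(jordanSuperdiag m) + p = ∑ i, (m i - 1 + 1) := by
        simp [card_jordanSuperdiag, sum_add_distrib]
    _ = ∑ i, m i := sum_congr rfl fun i _ => Nat.sub_add_cancel (hm i)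

theorem jordanSuperdiag_subset_offDiag (m : Fin p → ℕ) : jordanSuperdiag m ⊆ univ.offDiag := by
  rintro ⟨⟨i, j⟩, ⟨i', k⟩⟩ hz
  obtain ⟨rfl, h⟩ := mem_jordanSuperdiag.1 hz
  simp only [mem_offDiag, mem_univ, true_and, ne_eq, Sigma.mk.inj_iff, heq_eq_eq, true_and]
  rintro rfl
  omega

def jordanNilpotent (m : Fin p → ℕ) : Matrix (Σ i, Fin (m i)) (Σ i, Fin (m i)) ℂ :=
  of fun x y => if (x, y) ∈ jordanSuperdiag m then 1 else 0

theorem blockDiagonal'_jordanBlock (m : Fin p → ℕ) (lam : Fin p → ℂ) :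
    blockDiagonal' (fun i => jordanBlock (m i) (lam i)) =
      diagonal (fun x => lam x.1) + jordanNilpotent m := by
  ext ⟨i, j⟩ ⟨i', k⟩
  rcases eq_or_ne i i' with rfl | hi
  · by_cases hjk : j = k
    · subst hjk; simp [jordanBlock, jordanNilpotent, mem_jordanSuperdiag]
    · simp [jordanBlock, jordanNilpotent, mem_jordanSuperdiag, hjk]
  · simp [blockDiagonal'_apply_ne _ _ _ hi, jordanNilpotent, mem_jordanSuperdiag, hi]

def jordanScaling (m : Fin p → ℕ) (ε : ℂ) : (Σ i, Fin (m i)) → ℂ := fun x => ε ^ (x.2 : ℕ)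

theorem jordanScaling_ne_zero (m : Fin p → ℕ) {ε : ℂ} (hε : ε ≠ 0) (x : Σ i, Fin (m i)) :
    jordanScaling m ε x ≠ 0 :=
  pow_ne_zero _ hε

theorem jordanScaling_of_mem_jordanSuperdiag {m : Fin p → ℕ} (ε : ℂ) {x y : Σ i, Fin (m i)}
    (h : (x, y) ∈ jordanSuperdiag m) : jordanScaling m ε y = ε * jordanScaling m ε x := by
  obtain ⟨i, j⟩ := x
  obtain ⟨i', k⟩ := y
  obtain ⟨rfl, h⟩ := mem_jordanSuperdiag.1 h
  simp only [jordanScaling, ← h, pow_succ']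

theorem norm_jordanScaling_inv_mul_le {m : Fin p → ℕ} {mmax : ℕ} (hm : ∀ i, m i ≤ mmax)
    {ε : ℝ} (hε0 : 0 < ε) (hε1 : ε ≤ 1) (x y : Σ i, Fin (m i)) :
    ‖(jordanScaling m ε x)⁻¹ * jordanScaling m ε y‖ ≤ (ε ^ (mmax - 1))⁻¹ := by
  have hx : (x.2 : ℕ) ≤ mmax - 1 := by have := x.2.2; have := hm x.1; omega
  simp only [jordanScaling, norm_mul, norm_inv, norm_pow, Complex.norm_real, Real.norm_eq_abs,
    abs_of_pos hε0]
  calc (ε ^ (x.2 : ℕ))⁻¹ * ε ^ (y.2 : ℕ) ≤ (ε ^ (mmax - 1))⁻¹ * 1 := by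
        gcongr ?_ * ?_
        · exact inv_anti₀ (by positivity) (pow_le_pow_of_le_one hε0.le hε1 hx)
        · exact pow_le_one₀ hε0.le hε1
    _ = (ε ^ (mmax - 1))⁻¹ := mul_one _

theorem inv_diagonal_mul_jordanNilpotent_mul_diagonal (m : Fin p → ℕ) {ε : ℂ} (hε : ε ≠ 0) :
    (diagonal (jordanScaling m ε))⁻¹ * jordanNilpotent m * diagonal (jordanScaling m ε) =
      ε • jordanNilpotent m := by
  ext x y
  rw [inv_diagonal_mul_mul_diagonal_apply (jordanScaling_ne_zero m hε)]
  simp only [jordanNilpotent, Matrix.smul_apply, of_apply, smul_eq_mul]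
  split_ifs with h
  · rw [jordanScaling_of_mem_jordanSuperdiag ε h]
    field_simp [jordanScaling_ne_zero m hε x]
  · simp

theorem frobSq_smul_jordanNilpotent_add_conj_le {m : Fin p → ℕ} {mmax : ℕ}
    (hm : ∀ i, m i ≤ mmax) {ε : ℝ} (hε0 : 0 < ε) (hε1 : ε ≤ 1)
    (M : Matrix (Σ i, Fin (m i)) (Σ i, Fin (m i)) ℂ) :
    frobSq ((ε : ℂ) • jordanNilpotent m +
        (diagonal (jordanScaling m ε))⁻¹ * M * diagonal (jordanScaling m ε)) ≤
      ((ε ^ (mmax - 1))⁻¹) ^ 2 * deltaSq M +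
        2 * ε ^ 2 * Real.sqrt #(jordanSuperdiag m) * delta M + #(jordanSuperdiag m) * ε ^ 2 +
        1 / (Fintype.card (Σ i, Fin (m i)) : ℝ) * ‖M.trace‖ ^ 2 := by
  have hd := jordanScaling_ne_zero m (Complex.ofReal_ne_zero.2 hε0.ne')
  have happly : ∀ x y, ((ε : ℂ) • jordanNilpotent m + (diagonal (jordanScaling m ε))⁻¹ * M *
      diagonal (jordanScaling m ε)) x y = (if (x, y) ∈ jordanSuperdiag m then (ε : ℂ) else 0) +
        (jordanScaling m ε x)⁻¹ * M x y * jordanScaling m ε y := by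
    intro x y
    rw [Matrix.add_apply, inv_diagonal_mul_mul_diagonal_apply hd]
    simp [jordanNilpotent]
  have hK : 1 ≤ (ε ^ (mmax - 1))⁻¹ := one_le_inv₀ (by positivity) |>.2 (pow_le_one₀ hε0.le hε1)
  refine frobSq_le_of_entry_bounds (jordanSuperdiag_subset_offDiag m) hε0.le hε1 hK
    (fun x => ?_) (fun z hz => ?_) (fun z hz => ?_)
  · have hx : (x, x) ∉ jordanSuperdiag m := fun h => by
      simpa using jordanSuperdiag_subset_offDiag m h
    rw [happly, if_neg hx, zero_add, mul_right_comm, inv_mul_cancel₀ (hd x), one_mul]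
  · obtain ⟨x, y⟩ := z
    rw [happly, if_pos hz, jordanScaling_of_mem_jordanSuperdiag _ hz]
    calc ‖(ε : ℂ) + (jordanScaling m ε x)⁻¹ * M x y * (ε * jordanScaling m ε x)‖
        = ε * ‖1 + M x y‖ := by
          rw [show (ε : ℂ) + (jordanScaling m ε x)⁻¹ * M x y * (ε * jordanScaling m ε x) =
            ε * (1 + M x y) by field_simp [hd x]]
          rw [norm_mul, Complex.norm_real, Real.norm_of_nonneg hε0.le]
      _ ≤ ε * (1 + ‖M x y‖) := by
          gcongr
          simpa using norm_add_le 1 (M x y)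
  · rw [happly, if_neg (mem_sdiff.1 hz).2, zero_add, mul_right_comm, norm_mul]
    gcongr
    exact norm_jordanScaling_inv_mul_le hm hε0 hε1 _ _

end JordanForm

theorem stmt8_general {p : ℕ} (m : Fin p → ℕ) (hm : ∀ i, 1 ≤ m i)
    (lam : Fin p → ℂ)
    (Q : Matrix ((i : Fin p) × Fin (m i)) ((i : Fin p) × Fin (m i)) ℂ)
    (hQ : IsUnit Q.det)
    (E : Matrix ((i : Fin p) × Fin (m i)) ((i : Fin p) × Fin (m i)) ℂ)
    (ε : ℝ) (hε0 : 0 < ε) (hε1 : ε ≤ 1)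
    (n : ℕ) (hn : n = ∑ i, m i)
    (mmax : ℕ) (hmmax : mmax = Finset.univ.sup m)
    (A : Matrix ((i : Fin p) × Fin (m i)) ((i : Fin p) × Fin (m i)) ℂ)
    (hA : A = Q * Matrix.blockDiagonal' (fun i => jordanBlock (m i) (lam i)) * Q⁻¹)
    (Λ : Matrix ((i : Fin p) × Fin (m i)) ((i : Fin p) × Fin (m i)) ℂ)
    (hΛ : Λ = Matrix.blockDiagonal' fun i =>
      (lam i) • (1 : Matrix (Fin (m i)) (Fin (m i)) ℂ))
    (T : Matrix ((i : Fin p) × Fin (m i)) ((i : Fin p) × Fin (m i)) ℂ)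
    (hT : T = Matrix.blockDiagonal' fun i =>
      Matrix.diagonal fun j : Fin (m i) => (ε : ℂ) ^ (j : ℕ)) :
    frobSq (T⁻¹ * Q⁻¹ * (A + E) * Q * T - Λ) ≤
      ((ε ^ (mmax - 1))⁻¹) ^ 2 * deltaSq (Q⁻¹ * E * Q) +
        2 * ε ^ 2 * Real.sqrt ((n : ℝ) - p) * delta (Q⁻¹ * E * Q) +
        ((n : ℝ) - p) * ε ^ 2 +
        (1 / (n : ℝ)) * ‖E.trace‖ ^ 2 := by
  have hmax : ∀ i, m i ≤ mmax := fun i => hmmax ▸ le_sup (mem_univ i)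
  have hε : (ε : ℂ) ≠ 0 := Complex.ofReal_ne_zero.2 hε0.ne'
  have hT' : T = diagonal (jordanScaling m ε) := by rw [hT, blockDiagonal'_diagonal]; rfl
  have hΛ' : Λ = diagonal fun x => lam x.1 := by
    simp_rw [hΛ, smul_one_eq_diagonal, blockDiagonal'_diagonal]
  have hconj : Q⁻¹ * (A + E) * Q = Λ + jordanNilpotent m + Q⁻¹ * E * Q := by
    rw [hA, blockDiagonal'_jordanBlock, ← hΛ', Matrix.mul_add, Matrix.add_mul,
      ← Matrix.mul_assoc, ← Matrix.mul_assoc, nonsing_inv_mul _ hQ, Matrix.one_mul,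
      Matrix.mul_assoc, nonsing_inv_mul _ hQ, Matrix.mul_one]
  have hresidual : T⁻¹ * Q⁻¹ * (A + E) * Q * T - Λ =
      (ε : ℂ) • jordanNilpotent m + T⁻¹ * (Q⁻¹ * E * Q) * T := by
    rw [show T⁻¹ * Q⁻¹ * (A + E) * Q * T = T⁻¹ * (Q⁻¹ * (A + E) * Q) * T by
        simp only [Matrix.mul_assoc], hconj, Matrix.mul_add, Matrix.mul_add, Matrix.add_mul,
      Matrix.add_mul, hT', hΛ', inv_diagonal_mul_jordanNilpotent_mul_diagonal m hε,
      inv_diagonal_mul_diagonal_mul_diagonal (jordanScaling_ne_zero m hε)]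
    abel
  have hcard : (#(jordanSuperdiag m) : ℝ) = n - p := by
    rw [eq_sub_iff_add_eq, hn]
    exact_mod_cast card_jordanSuperdiag_add hm
  have hcard_index : Fintype.card (Σ i, Fin (m i)) = n := by simp [hn]
  have htrace : (Q⁻¹ * E * Q).trace = E.trace := by
    rw [trace_mul_cycle, mul_nonsing_inv _ hQ, Matrix.one_mul]
  have key := frobSq_smul_jordanNilpotent_add_conj_le hmax hε0 hε1 (Q⁻¹ * E * Q)
  rw [hcard, hcard_index, htrace, ← hT'] at key
  rwa [hresidual]

theorem stmt8 {p : ℕ} (hp : 1 ≤ p) (m : Fin p → ℕ) (hm : ∀ i, 1 ≤ m i)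
    (lam : Fin p → ℂ)
    (Q : Matrix ((i : Fin p) × Fin (m i)) ((i : Fin p) × Fin (m i)) ℂ)
    (hQ : IsUnit Q.det)
    (E : Matrix ((i : Fin p) × Fin (m i)) ((i : Fin p) × Fin (m i)) ℂ)
    (ε : ℝ) (hε0 : 0 < ε) (hε1 : ε ≤ 1)
    (n : ℕ) (hn : n = ∑ i, m i)
    (mmax : ℕ) (hmmax : mmax = Finset.univ.sup m)
    (A : Matrix ((i : Fin p) × Fin (m i)) ((i : Fin p) × Fin (m i)) ℂ)
    (hA : A = Q * Matrix.blockDiagonal' (fun i => jordanBlock (m i) (lam i)) * Q⁻¹)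
    (Λ : Matrix ((i : Fin p) × Fin (m i)) ((i : Fin p) × Fin (m i)) ℂ)
    (hΛ : Λ = Matrix.blockDiagonal' fun i =>
      (lam i) • (1 : Matrix (Fin (m i)) (Fin (m i)) ℂ))
    (T : Matrix ((i : Fin p) × Fin (m i)) ((i : Fin p) × Fin (m i)) ℂ)
    (hT : T = Matrix.blockDiagonal' fun i =>
      Matrix.diagonal fun j : Fin (m i) => (ε : ℂ) ^ (j : ℕ)) :
    frobSq (T⁻¹ * Q⁻¹ * (A + E) * Q * T - Λ) ≤
      ((ε ^ (mmax - 1))⁻¹) ^ 2 * deltaSq (Q⁻¹ * E * Q) +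
        2 * ε ^ 2 * Real.sqrt ((n : ℝ) - p) * delta (Q⁻¹ * E * Q) +
        ((n : ℝ) - p) * ε ^ 2 +
        (1 / (n : ℝ)) * ‖E.trace‖ ^ 2 :=
  stmt8_general m hm lam Q hQ E ε hε0 hε1 n hn mmax hmmax A hA Λ hΛ T hT
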